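/- arXiv:1612.06119 — 3 statements merged into one kernel-verified Lean document; each statement's English description precedes it below -/
import Mathlib

section
/- Let A = ℂ[x,y,z]/(x² + y² + z² − z), and let λ : ℂ[a,b,c] → A be the ℂ-algebra homomorphism sending a ↦ (1−2z)x, b ↦ (1−3z)y, c ↦ (1−z)z. Then A is integral over the image of λ; i.e., the corresponding morphism of affine varieties φ : V(x²+y²+z²−z) → 𝔸³, (x,y,z) ↦ ((1−2z)x, (1−3z)y, (1−z)z), is a finite morphism. -/
open MvPolynomial

set_option maxHeartbeats 1000000
set_option synthInstance.maxHeartbeats 400000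

/-- The coordinate ring `A = ℂ[x,y,z]/(x² + y² + z² − z)` of the sphere. -/
abbrev sphereRing : Type :=
  MvPolynomial (Fin 3) ℂ ⧸
    Ideal.span {(X 0 ^ 2 + X 1 ^ 2 + X 2 ^ 2 - X 2 : MvPolynomial (Fin 3) ℂ)}

/-- Images of the coordinates `x, y, z` in `A`. -/
noncomputable abbrev sx : sphereRing := Ideal.Quotient.mk _ (X 0)
noncomputable abbrev sy : sphereRing := Ideal.Quotient.mk _ (X 1)
noncomputable abbrev sz : sphereRing := Ideal.Quotient.mk _ (X 2)

/-- The ℂ-algebra map `λ : ℂ[a,b,c] → A`, `a ↦ (1−2z)x`, `b ↦ (1−3z)y`, `c ↦ (1−z)z`. -/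
noncomputable abbrev lam : MvPolynomial (Fin 3) ℂ →+* sphereRing :=
  (aeval ![(1 - 2 * sz) * sx, (1 - 3 * sz) * sy, (1 - sz) * sz]).toRingHom

/-- RingHom version of `IsIntegral.of_pow`. -/
theorem RingHom.IsIntegralElem.of_pow'' {R S : Type*} [CommRing R] [CommRing S]
    (f : R →+* S) {x : S} {n : ℕ} (hn : 0 < n) (h : f.IsIntegralElem (x ^ n)) :
    f.IsIntegralElem x := by
  letI : Algebra R S := f.toAlgebra
  exact IsIntegral.of_pow hn h

/-- `A` is integral over the image of `λ`; i.e. the corresponding morphism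
`φ : V(x²+y²+z²−z) → 𝔸³` is finite. -/
theorem sphereRing_integral_over_lam : lam.IsIntegral := by
  -- the defining relation of the sphere in `A`
  have key : sx ^ 2 + sy ^ 2 + sz ^ 2 - sz = 0 := by
    have h : (Ideal.Quotient.mk
        (Ideal.span {(X 0 ^ 2 + X 1 ^ 2 + X 2 ^ 2 - X 2 : MvPolynomial (Fin 3) ℂ)}))
        (X 0 ^ 2 + X 1 ^ 2 + X 2 ^ 2 - X 2) = 0 :=
      Ideal.Quotient.eq_zero_iff_mem.mpr (Ideal.subset_span rfl)
    simp only [map_add, map_sub, map_pow] at h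
    exact h
  -- values of `lam` on the variables
  have hc : lam (X 2) = (1 - sz) * sz := by simp
  -- `sz` is integral: it satisfies `T² − T + c = 0`
  have hz : lam.IsIntegralElem sz := by
    refine ⟨Polynomial.X ^ 2 - Polynomial.X + Polynomial.C (X 2), ?_, ?_⟩
    · monicity!
    · simp only [Polynomial.eval₂_add, Polynomial.eval₂_sub, Polynomial.eval₂_pow,
        Polynomial.eval₂_X, Polynomial.eval₂_C]
      rw [hc]; ring
  -- `sy²` is integral: key identity using `9(1-4c) - 4(2-9c) = 1`
  have ey : sy ^ 2 =
      lam ((81 * (1 - 4 * X 2) - 72 * (2 - 9 * X 2)) * ((1 - 4 * X 2) * X 2 - X 0 ^ 2)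
        + 16 * (4 - 9 * X 2) * X 1 ^ 2) - lam (48 * X 1 ^ 2) * sz := by
    simp only [AlgHom.toRingHom_eq_coe, RingHom.coe_coe, map_add, map_sub, map_mul, map_pow,
      map_ofNat, map_one, aeval_X, Matrix.cons_val_zero, Matrix.cons_val_one, Matrix.head_cons,
      Matrix.cons_val_two, Matrix.tail_cons]
    linear_combination ((81 * (1 - 4 * ((1 - sz) * sz)) - 72 * (2 - 9 * ((1 - sz) * sz)))
      * (1 - 4 * ((1 - sz) * sz))) * key
  have hy2 : lam.IsIntegralElem (sy ^ 2) := by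
    rw [ey]
    exact (lam.isIntegralElem_map).sub lam ((lam.isIntegralElem_map).mul lam hz)
  have hy : lam.IsIntegralElem sy := RingHom.IsIntegralElem.of_pow'' lam two_pos hy2
  -- `sx²` is integral from the sphere relation
  have ex : sx ^ 2 = sz - sz * sz - sy ^ 2 := by linear_combination key
  have hx2 : lam.IsIntegralElem (sx ^ 2) := by
    rw [ex]
    exact (hz.sub lam (hz.mul lam hz)).sub lam hy2
  have hx : lam.IsIntegralElem sx := RingHom.IsIntegralElem.of_pow'' lam two_pos hx2
  -- integrality of the images of the three variables
  have hXi : ∀ i : Fin 3, lam.IsIntegralElem (Ideal.Quotient.mk _ (X i)) := by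
    intro i
    fin_cases i
    · exact hx
    · exact hy
    · exact hz
  -- every element of `A` is integral, by induction on a representative polynomial
  intro w
  obtain ⟨p, rfl⟩ := Ideal.Quotient.mk_surjective w
  induction p using MvPolynomial.induction_on with
  | C a =>
      have : (Ideal.Quotient.mk _ (C a : MvPolynomial (Fin 3) ℂ) : sphereRing)
          = lam (C a) := by simp; rfl
      rw [this]
      exact lam.isIntegralElem_map
  | add p q hp hq =>
      rw [map_add]
      exact hp.add lam hq
  | mul_X p i hp =>
      rw [map_mul]
      exact hp.mul lam (hXi i)
end

section
/- Let X = {(x,y,z) ∈ ℂ³ : x² + y² + z² = z} and φ : X → ℂ³, φ(x,y,z) = ((1−2z)x, (1−3z)y, (1−z)z). Suppose (x₁,y₁,z₁), (x₂,y₂,z₂) ∈ X satisfy φ(x₁,y₁,z₁) = φ(x₂,y₂,z₂) and z₁ ≠ z₂. Then x₁ = −x₂, y₁ = y₂ = 0, and z₁ + z₂ = 1. -/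
/-- Points of the sphere `x²+y²+z² = z` with the same image under
`φ(x,y,z) = ((1−2z)x, (1−3z)y, (1−z)z)` and distinct third coordinates satisfy
`x₁ = −x₂`, `y₁ = y₂ = 0` and `z₁ + z₂ = 1`. -/
theorem fiber_distinct_z
    (x₁ y₁ z₁ x₂ y₂ z₂ : ℂ)
    (h₁ : x₁ ^ 2 + y₁ ^ 2 + z₁ ^ 2 = z₁)
    (h₂ : x₂ ^ 2 + y₂ ^ 2 + z₂ ^ 2 = z₂)
    (ha : (1 - 2 * z₁) * x₁ = (1 - 2 * z₂) * x₂)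
    (hb : (1 - 3 * z₁) * y₁ = (1 - 3 * z₂) * y₂)
    (hc : (1 - z₁) * z₁ = (1 - z₂) * z₂)
    (hz : z₁ ≠ z₂) :
    x₁ = -x₂ ∧ y₁ = 0 ∧ y₂ = 0 ∧ z₁ + z₂ = 1 := by
  have hzz : z₁ - z₂ ≠ 0 := sub_ne_zero.mpr hz
  have hs : z₁ + z₂ = 1 := by
    have h : (z₁ - z₂) * (1 - (z₁ + z₂)) = 0 := by linear_combination hc
    rcases mul_eq_zero.mp h with h | h
    · exact absurd h hzz
    · linear_combination -h
  have hne : (1 : ℂ) - 2 * z₁ ≠ 0 := by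
    intro h
    apply hz
    have hz1 : z₁ = 1 / 2 := by linear_combination -h / 2
    have hz2 : z₂ = 1 / 2 := by linear_combination hs - hz1
    rw [hz1, hz2]
  have hx : x₁ = -x₂ := by
    have h : (1 - 2 * z₁) * (x₁ + x₂) = 0 := by
      linear_combination ha - 2 * x₂ * hs
    rcases mul_eq_zero.mp h with h | h
    · exact absurd h hne
    · linear_combination h
  have hy2 : y₂ ^ 2 = y₁ ^ 2 := by
    linear_combination h₂ - h₁ - hc + (x₁ - x₂) * hx
  have hy1 : y₁ = 0 := by
    have h : 3 * (z₁ - z₂) * y₁ ^ 2 = 0 := by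
      linear_combination ((1 - 3 * z₁) * y₁ + (1 - 3 * z₂) * y₂) * hb +
        (1 - 3 * z₂) ^ 2 * hy2 + 9 * (z₁ - z₂) * y₁ ^ 2 * hs + 18 * y₁ ^ 2 * hc
    rcases mul_eq_zero.mp h with h' | h'
    · exact absurd ((mul_eq_zero.mp h').resolve_left (by norm_num)) hzz
    · exact pow_eq_zero_iff (n := 2) (by norm_num) |>.mp h'
  have hy2' : y₂ = 0 := by
    have : y₂ ^ 2 = 0 := by rw [hy2, hy1]; ring
    exact pow_eq_zero_iff (n := 2) (by norm_num) |>.mp this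
  exact ⟨hx, hy1, hy2', hs⟩
end

section
/- Let φ : X → Y be a finite dominant morphism of affine varieties over an algebraically closed field k with Y normal. Let W ⊆ Y be an irreducible closed subvariety and Z any irreducible component of φ⁻¹(W). Then φ(Z) = W and dim Z = dim W. -/
/-!
An integral extension `B ⊆ A` of domains with `B` integrally closed has going down, so a
prime `Q ⊆ q'` lying over `q` exists; it contains `qA`, hence equals `q'` by minimality, and
`q'` lies over `q`. Integrality (lying over and going up) then makes the image of `V(q')` the
closed set `V(q)`, and `A ⧸ q'` is an integral extension of `B ⧸ q`: chains of primes lift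
along it by going up and stay strict under contraction by incomparability, so the Krull
dimensions agree.
-/

section

variable {R S : Type*} [CommRing R] [CommRing S] [Algebra R S]

theorem Ideal.under_eq_of_mem_minimalPrimes_map [Algebra.HasGoingDown R S] {p : Ideal R}
    [p.IsPrime] {P : Ideal S} (hP : P ∈ (p.map (algebraMap R S)).minimalPrimes) :
    P.under R = p := by
  obtain ⟨⟨hPprime, hpP⟩, hPmin⟩ := hP
  have hp_le : p ≤ P.under R := Ideal.map_le_iff_le_comap.mp hpP
  obtain ⟨Q, hQP, hQprime, hQp⟩ := Ideal.exists_ideal_le_liesOver_of_le P hp_le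
  have hpQ : p.map (algebraMap R S) ≤ Q := Ideal.map_le_iff_le_comap.mpr hQp.over.le
  rw [← le_antisymm hQP (hPmin ⟨hQprime, hpQ⟩ hQP), ← hQp.over]

theorem PrimeSpectrum.image_comap_zeroLocus_of_isIntegral [Algebra.IsIntegral R S]
    (I : Ideal S) :
    comap (algebraMap R S) '' zeroLocus I = zeroLocus (I.comap (algebraMap R S)) := by
  rw [← closure_image_comap_zeroLocus, ((isClosedMap_comap_of_isIntegral _
    (algebraMap_isIntegral_iff.mpr inferInstance)) _ (isClosed_zeroLocus _)).closure_eq]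

theorem ringKrullDim_eq_of_isIntegral [Algebra.IsIntegral R S] [FaithfulSMul R S] :
    ringKrullDim S = ringKrullDim R := by
  refine le_antisymm ?_ (iSup_le fun l ↦ ?_)
  · exact Order.krullDim_le_of_strictMono (PrimeSpectrum.comap (algebraMap R S))
      fun _ _ hPQ ↦ Ideal.IsIntegral.comap_lt_comap (R := R) hPQ
  · obtain ⟨P, hP⟩ := Algebra.IsIntegral.comap_surjective R S l.head
    have : P.asIdeal.LiesOver l.head.asIdeal := ⟨congrArg PrimeSpectrum.asIdeal hP.symm⟩
    obtain ⟨L, hL, -⟩ := Ideal.exists_ltSeries_of_hasGoingUp l P.asIdeal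
    exact hL ▸ Order.LTSeries.length_le_krullDim L

end

theorem finite_dominant_normal_image_of_component_general
    (A B : Type*)
    [CommRing A] [CommRing B] [IsDomain A]
    [Algebra B A] [Algebra.IsIntegral B A]
    [IsIntegrallyClosed B]
    (hinj : Function.Injective (algebraMap B A))
    (q : Ideal B) (hq : q.IsPrime)
    (q' : Ideal A) (hq' : q' ∈ (q.map (algebraMap B A)).minimalPrimes) :
    PrimeSpectrum.comap (algebraMap B A) ''
        PrimeSpectrum.zeroLocus (q' : Set A) =
      PrimeSpectrum.zeroLocus (q : Set B) ∧
      ringKrullDim (A ⧸ q') = ringKrullDim (B ⧸ q) := by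
  have : FaithfulSMul B A := (faithfulSMul_iff_algebraMap_injective B A).mpr hinj
  have hq'q : q'.under B = q := Ideal.under_eq_of_mem_minimalPrimes_map hq'
  have : q'.LiesOver q := ⟨hq'q.symm⟩
  refine ⟨?_, ringKrullDim_eq_of_isIntegral⟩
  rw [PrimeSpectrum.image_comap_zeroLocus_of_isIntegral, ← Ideal.under_def, hq'q]

/-- Proposition 2 of the paper: let `φ : X → Y` be a finite dominant morphism of affine
varieties over an algebraically closed field `k`, with `Y` normal.  In terms of
coordinate rings: `B = k[Y] ⊆ A = k[X]` is an injective integral extension of domains of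
finite type over `k` with `B` integrally closed.  If `W = V(𝔮)` is an irreducible closed
subvariety of `Y` and `Z = V(𝔮̃)` an irreducible component of `φ⁻¹(W)` (so `𝔮̃` is a
minimal prime over `𝔮A`), then `φ(Z) = W` and `dim Z = dim W`. -/
theorem finite_dominant_normal_image_of_component
    (k A B : Type*) [Field k] [IsAlgClosed k]
    [CommRing A] [CommRing B] [IsDomain A] [IsDomain B]
    [Algebra k A] [Algebra k B] [Algebra.FiniteType k A] [Algebra.FiniteType k B]
    [Algebra B A] [IsScalarTower k B A] [Algebra.IsIntegral B A]
    [IsIntegrallyClosed B]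
    (hinj : Function.Injective (algebraMap B A))
    (q : Ideal B) (hq : q.IsPrime)
    (q' : Ideal A) (hq' : q' ∈ (q.map (algebraMap B A)).minimalPrimes) :
    PrimeSpectrum.comap (algebraMap B A) ''
        PrimeSpectrum.zeroLocus (q' : Set A) =
      PrimeSpectrum.zeroLocus (q : Set B) ∧
      ringKrullDim (A ⧸ q') = ringKrullDim (B ⧸ q) :=
  finite_dominant_normal_image_of_component_general A B hinj q hq q' hq'
end
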